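/- Let ⋆ be a semistar operation on an integral domain D. Then D is ⋆-quasi-Prüfer if and only if for every upper to zero Q in D[X] and every quasi-⋆-prime ideal P of D, c(Q) ⊄ P. -/

import Mathlib

/-- A semistar operation on `D` (with quotient field `K`) in the sense of Okabe–Matsuda:
a map on `D`-submodules of `K` that is extensive, monotone and idempotent on nonzero
submodules, and commutes with multiplication by nonzero elements of `K`. -/
structure SemistarOp (D K : Type*) [CommRing D] [Field K] [Algebra D K] where
  op : Submodule D K → Submodule D K
  le_op : ∀ E : Submodule D K, E ≠ ⊥ → E ≤ op E
  mono : ∀ E F : Submodule D K, E ≠ ⊥ → E ≤ F → op E ≤ op F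
  idem : ∀ E : Submodule D K, E ≠ ⊥ → op (op E) = op E
  smul : ∀ (x : K) (E : Submodule D K), x ≠ 0 → E ≠ ⊥ →
    op (Submodule.map (LinearMap.mulLeft D x) E)
      = Submodule.map (LinearMap.mulLeft D x) (op E)

/-- A quasi-`⋆`-prime: a nonzero prime ideal `P` of `D` with `P^⋆ ∩ D = P`. -/
def QuasiStarPrime {D K : Type*} [CommRing D] [Field K] [Algebra D K]
    (s : SemistarOp D K) (P : Ideal D) : Prop :=
  P.IsPrime ∧ P ≠ ⊥ ∧
    Submodule.comap (Algebra.linearMap D K)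
      (s.op (Submodule.map (Algebra.linearMap D K) P)) = P

/-- `⋆`-quasi-Prüfer domain: every prime `Q` of `D[X]` contained in `P[X]` for some
quasi-`⋆`-prime `P` is extended from `D`. -/
def StarQuasiPrufer {D K : Type*} [CommRing D] [Field K] [Algebra D K]
    (s : SemistarOp D K) : Prop :=
  ∀ Q : Ideal (Polynomial D), Q.IsPrime →
    (∃ P : Ideal D, QuasiStarPrime s P ∧
      Q ≤ Ideal.map (Polynomial.C : D →+* Polynomial D) P) →
    Q = Ideal.map (Polynomial.C : D →+* Polynomial D)
      (Q.comap (Polynomial.C : D →+* Polynomial D))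

/-- The content ideal of an ideal of polynomials. -/
def contentIdealOfIdeal {D : Type*} [CommRing D] (J : Ideal (Polynomial D)) : Ideal D :=
  Ideal.span {a : D | ∃ f ∈ J, ∃ n : ℕ, Polynomial.coeff f n = a}

open Polynomial in
/-- Pseudo-division: dividing `h` by a nonzero `f` after multiplying by a power of the
leading coefficient of `f`. -/
theorem exists_pseudo_div {D : Type*} [CommRing D] [IsDomain D] :
    ∀ (N : ℕ) (f h : Polynomial D), f ≠ 0 → h.natDegree ≤ N →
      ∃ (s : ℕ) (q r : Polynomial D),
        C f.leadingCoeff ^ s * h = f * q + r ∧ r.degree < f.degree := by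
  intro N
  induction N with
  | zero =>
    intro f h hf hN
    by_cases hlt : h.degree < f.degree
    · exact ⟨0, 0, h, by ring, hlt⟩
    · push_neg at hlt
      have hh0 : h ≠ 0 := by
        rintro rfl
        rw [degree_zero, le_bot_iff, degree_eq_bot] at hlt
        exact hf hlt
      have hfd : f.natDegree = 0 := by
        have h1 := natDegree_le_natDegree hlt
        omega
      have hfC : f = C f.leadingCoeff := by
        conv_lhs => rw [eq_C_of_natDegree_eq_zero hfd]
        rw [← coeff_natDegree, hfd]
      refine ⟨1, h, 0, ?_, ?_⟩
      · rw [pow_one, add_zero, ← hfC]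
      · rw [degree_zero]
        exact bot_lt_iff_ne_bot.mpr fun hb => hf (degree_eq_bot.mp hb)
  | succ N ih =>
    intro f h hf hN
    by_cases hlt : h.degree < f.degree
    · exact ⟨0, 0, h, by ring, hlt⟩
    push_neg at hlt
    have hh0 : h ≠ 0 := by
      rintro rfl
      rw [degree_zero, le_bot_iff, degree_eq_bot] at hlt
      exact hf hlt
    have hfc0 : f.leadingCoeff ≠ 0 := leadingCoeff_ne_zero.mpr hf
    have hhc0 : h.leadingCoeff ≠ 0 := leadingCoeff_ne_zero.mpr hh0
    have hdlef : f.natDegree ≤ h.natDegree := natDegree_le_natDegree hlt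
    set k := h.natDegree - f.natDegree with hk
    have hdg : (C h.leadingCoeff * X ^ k * f).degree = h.degree := by
      rw [mul_assoc, degree_C_mul hhc0, degree_mul, degree_X_pow,
        degree_eq_natDegree hf, degree_eq_natDegree hh0, ← Nat.cast_add]
      norm_cast
      omega
    have hdg2 : (C f.leadingCoeff * h).degree = h.degree := degree_C_mul hfc0
    have hlc : (C f.leadingCoeff * h).leadingCoeff
        = (C h.leadingCoeff * X ^ k * f).leadingCoeff := by
      rw [leadingCoeff_mul, leadingCoeff_mul, leadingCoeff_mul, leadingCoeff_C,
        leadingCoeff_C, leadingCoeff_X_pow]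
      ring
    have hsub : (C f.leadingCoeff * h - C h.leadingCoeff * X ^ k * f).degree < h.degree := by
      have hd := degree_sub_lt (hdg2.trans hdg.symm)
        (mul_ne_zero (fun hc => hfc0 (C_eq_zero.mp hc)) hh0) hlc
      rwa [hdg2] at hd
    set h' := C f.leadingCoeff * h - C h.leadingCoeff * X ^ k * f with hh'
    by_cases hz : h' = 0
    · refine ⟨1, C h.leadingCoeff * X ^ k, 0, ?_, ?_⟩
      · have hzz := sub_eq_zero.mp (hh' ▸ hz)
        rw [pow_one, add_zero]
        linear_combination hzz
      · rw [degree_zero]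
        exact bot_lt_iff_ne_bot.mpr fun hb => hf (degree_eq_bot.mp hb)
    · have hlt' : h'.natDegree < h.natDegree := natDegree_lt_natDegree hz hsub
      obtain ⟨s, q, r, heq, hr⟩ := ih f h' hf (by omega)
      refine ⟨s + 1, q + C f.leadingCoeff ^ s * (C h.leadingCoeff * X ^ k), r, ?_, hr⟩
      rw [hh'] at heq
      linear_combination heq

/-- `D` is `⋆`-quasi-Prüfer iff for every upper to zero `Q` in `D[X]` and
every quasi-`⋆`-prime `P` of `D`, the content of `Q` is not contained in `P`. -/
theorem starQuasiPrufer_iff_content_not_le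
    (D K : Type*) [CommRing D] [IsDomain D] [Field K] [Algebra D K] [IsFractionRing D K]
    (s : SemistarOp D K) :
    StarQuasiPrufer s ↔
      ∀ Q : Ideal (Polynomial D), Q.IsPrime → Q ≠ ⊥ →
        Q.comap (Polynomial.C : D →+* Polynomial D) = ⊥ →
        ∀ P : Ideal D, QuasiStarPrime s P → ¬ contentIdealOfIdeal Q ≤ P := by
  constructor
  · -- forward direction
    intro hSQ Q hQp hQ0 hQD P hP hle
    have hQle : Q ≤ Ideal.map (Polynomial.C : D →+* Polynomial D) P := by
      intro f hf
      rw [Ideal.mem_map_C_iff]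
      exact fun n => hle (Ideal.subset_span ⟨f, hf, n, rfl⟩)
    have h := hSQ Q hQp ⟨P, hP, hQle⟩
    rw [hQD, Ideal.map_bot] at h
    exact hQ0 h
  · -- backward direction
    intro H Q hQp hex
    obtain ⟨P, hP, hQP⟩ := hex
    classical
    refine le_antisymm ?_ Ideal.map_comap_le
    set p : Ideal D := Q.comap (Polynomial.C : D →+* Polynomial D) with hpdef
    by_contra hcon
    obtain ⟨f0, hf0Q, hf0m⟩ := SetLike.not_le_iff_exists.mp hcon
    have hexn : ∃ n : ℕ, ∃ g : Polynomial D, g ∈ Q ∧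
        g ∉ Ideal.map (Polynomial.C : D →+* Polynomial D) p ∧ g.natDegree = n :=
      ⟨f0.natDegree, f0, hf0Q, hf0m, rfl⟩
    obtain ⟨f, hfQ, hfm, hfd⟩ := Nat.find_spec hexn
    have hf0' : f ≠ 0 := fun h =>
      hfm (h ▸ (Ideal.map (Polynomial.C : D →+* Polynomial D) p).zero_mem)
    have hn1 : 1 ≤ f.natDegree := by
      rcases Nat.eq_zero_or_pos f.natDegree with h0 | h
      · exfalso
        obtain ⟨a, ha⟩ := Polynomial.natDegree_eq_zero.mp h0
        have haQ : (Polynomial.C : D →+* Polynomial D) a ∈ Q := by rw [← ha] at hfQ; exact hfQ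
        have hap : a ∈ p := Ideal.mem_comap.mpr haQ
        exact hfm (by rw [← ha]; exact Ideal.mem_map_of_mem _ hap)
      · exact h
    have hclaim1 : f.leadingCoeff ∉ p := by
      intro hc
      have hCX : Polynomial.C f.leadingCoeff * Polynomial.X ^ f.natDegree ∈ Q :=
        Q.mul_mem_right _ (Ideal.mem_comap.mp hc)
      have hgQ : f.eraseLead ∈ Q := by
        have he : f.eraseLead = f - Polynomial.C f.leadingCoeff * Polynomial.X ^ f.natDegree :=
          eq_sub_of_add_eq (Polynomial.eraseLead_add_C_mul_X_pow f)
        rw [he]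
        exact Ideal.sub_mem Q hfQ hCX
      have hgm : f.eraseLead ∉ Ideal.map (Polynomial.C : D →+* Polynomial D) p := by
        intro hmem
        rw [Ideal.mem_map_C_iff] at hmem
        have hnall : ¬ ∀ m, f.coeff m ∈ p := fun hall => hfm (Ideal.mem_map_C_iff.mpr hall)
        push_neg at hnall
        obtain ⟨m, hm⟩ := hnall
        have hmne : m ≠ f.natDegree := fun he => hm (by rw [he, Polynomial.coeff_natDegree]; exact hc)
        have hc2 := hmem m
        rw [Polynomial.eraseLead_coeff_of_ne m hmne] at hc2
        exact hm hc2
      have hdlt : f.eraseLead.natDegree < Nat.find hexn := by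
        have hle2 := Polynomial.eraseLead_natDegree_le f
        omega
      exact Nat.find_min hexn hdlt ⟨f.eraseLead, hgQ, hgm, rfl⟩
    -- pass to the fraction field
    have hinj : Function.Injective (algebraMap D K) := IsFractionRing.injective D K
    set F : Polynomial K := f.map (algebraMap D K) with hFdef
    have hF0 : F ≠ 0 := (Polynomial.map_ne_zero_iff hinj).mpr hf0'
    -- for each irreducible polynomial over K, the corresponding upper to zero gives a
    -- multiple with some coefficient outside P
    have upper : ∀ φ : Polynomial K, Irreducible φ →
        ∃ h : Polynomial D, φ ∣ h.map (algebraMap D K) ∧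
          h ∉ Ideal.map (Polynomial.C : D →+* Polynomial D) P := by
      intro φ hφ
      have hφ0 : φ ≠ 0 := hφ.ne_zero
      have hφn : 0 < φ.natDegree := by
        rcases Nat.eq_zero_or_pos φ.natDegree with h0 | h
        · exfalso
          obtain ⟨a, ha⟩ := Polynomial.natDegree_eq_zero.mp h0
          have ha0 : a ≠ 0 := fun h => hφ0 (by rw [← ha, h, map_zero])
          exact hφ.not_isUnit (by rw [← ha]; exact Polynomial.isUnit_C.mpr ha0.isUnit)
        · exact h
      have hφdeg : 0 < φ.degree := Polynomial.natDegree_pos_iff_degree_pos.mp hφn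
      have hφprime : Prime φ := UniqueFactorizationMonoid.irreducible_iff_prime.mp hφ
      set U : Ideal (Polynomial D) :=
        Ideal.comap (Polynomial.mapRingHom (algebraMap D K)) (Ideal.span {φ}) with hUdef
      haveI hsp : (Ideal.span ({φ} : Set (Polynomial K))).IsPrime :=
        (Ideal.span_singleton_prime hφ0).mpr hφprime
      have hUp : U.IsPrime := Ideal.IsPrime.comap _
      have hU0 : U ≠ ⊥ := by
        rw [Submodule.ne_bot_iff]
        refine ⟨IsLocalization.integerNormalization (nonZeroDivisors D) φ, ?_, ?_⟩
        · show Polynomial.mapRingHom (algebraMap D K)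
            (IsLocalization.integerNormalization (nonZeroDivisors D) φ) ∈ Ideal.span {φ}
          obtain ⟨b, hb⟩ := IsLocalization.integerNormalization_map_to_map (nonZeroDivisors D) φ
          rw [Ideal.mem_span_singleton]
          show φ ∣ (IsLocalization.integerNormalization (nonZeroDivisors D) φ).map (algebraMap D K)
          rw [hb, ← IsScalarTower.algebraMap_smul K (b : D) φ, Polynomial.smul_eq_C_mul]
          exact dvd_mul_left φ _
        · rw [Ne, IsFractionRing.integerNormalization_eq_zero_iff]
          exact hφ0
      have hUD : U.comap (Polynomial.C : D →+* Polynomial D) = ⊥ := by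
        rw [eq_bot_iff]
        intro a ha
        rw [Ideal.mem_comap, Ideal.mem_comap, Ideal.mem_span_singleton] at ha
        have ha' : φ ∣ Polynomial.C (algebraMap D K a) := by
          rwa [Polynomial.coe_mapRingHom, Polynomial.map_C] at ha
        rw [Ideal.mem_bot]
        by_contra ha0
        have haK : algebraMap D K a ≠ 0 := fun h =>
          ha0 (hinj (by rw [h, map_zero]))
        have hCa : (Polynomial.C (algebraMap D K a) : Polynomial K) ≠ 0 :=
          fun h => haK (Polynomial.C_eq_zero.mp h)
        have hdle := Polynomial.degree_le_of_dvd ha' hCa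
        rw [Polynomial.degree_C haK] at hdle
        exact hφdeg.not_ge hdle
      have hnc := H U hUp hU0 hUD P hP
      have hns : ¬ {a : D | ∃ g ∈ U, ∃ n : ℕ, g.coeff n = a} ⊆ ↑P :=
        fun hsub => hnc (Ideal.span_le.mpr hsub)
      obtain ⟨a, ⟨g, hgU, m, hgm⟩, haP⟩ := Set.not_subset.mp hns
      refine ⟨g, ?_, ?_⟩
      · have := Ideal.mem_span_singleton.mp (Ideal.mem_comap.mp hgU)
        rwa [Polynomial.coe_mapRingHom] at this
      · intro hmem
        exact haP (hgm ▸ Ideal.mem_map_C_iff.mp hmem m)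
    -- the extension of P to D[X] is prime
    haveI hPXp : (Ideal.map (Polynomial.C : D →+* Polynomial D) P).IsPrime :=
      by haveI := hP.1; exact Ideal.isPrime_map_C_of_isPrime
    -- product over a multiset of irreducibles
    have prodlem : ∀ ms : Multiset (Polynomial K), (∀ φ ∈ ms, Irreducible φ) →
        ∃ h : Polynomial D, ms.prod ∣ h.map (algebraMap D K) ∧
          h ∉ Ideal.map (Polynomial.C : D →+* Polynomial D) P := by
      intro ms
      induction ms using Multiset.induction_on with
      | empty => exact fun _ => ⟨1, by simp, (Ideal.ne_top_iff_one _).mp hPXp.ne_top⟩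
      | cons φ msr ih =>
        intro hall
        obtain ⟨h1, hd1, hm1⟩ := upper φ (hall φ (Multiset.mem_cons_self φ msr))
        obtain ⟨h2, hd2, hm2⟩ := ih fun ψ hψ => hall ψ (Multiset.mem_cons_of_mem hψ)
        refine ⟨h1 * h2, ?_, fun hmem => ?_⟩
        · rw [Multiset.prod_cons, Polynomial.map_mul]
          exact mul_dvd_mul hd1 hd2
        · rcases hPXp.mem_or_mem hmem with h | h
          exacts [hm1 h, hm2 h]
    obtain ⟨h, hdvd, hhP⟩ := prodlem (UniqueFactorizationMonoid.factors F)
      (fun φ hφ => UniqueFactorizationMonoid.irreducible_of_factor φ hφ)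
    have hFh : F ∣ h.map (algebraMap D K) :=
      dvd_trans (UniqueFactorizationMonoid.factors_prod hF0).symm.dvd hdvd
    -- pseudo-division of h by f
    obtain ⟨t, q, r, heq, hr⟩ := exists_pseudo_div h.natDegree f h hf0' le_rfl
    have hrK : r.map (algebraMap D K) = 0 := by
      have hmap := congrArg (Polynomial.map (algebraMap D K)) heq
      rw [Polynomial.map_mul, Polynomial.map_add, Polynomial.map_mul, Polynomial.map_pow,
        Polynomial.map_C] at hmap
      have hFr : F ∣ r.map (algebraMap D K) := by
        have hre : r.map (algebraMap D K) =
            Polynomial.C (algebraMap D K f.leadingCoeff) ^ t * h.map (algebraMap D K)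
              - F * q.map (algebraMap D K) := by
          rw [eq_sub_iff_add_eq, add_comm]
          exact hmap.symm
        rw [hre]
        exact dvd_sub (hFh.mul_left _) (Dvd.dvd.mul_right dvd_rfl _)
      have hdF : r.degree < F.degree := by
        rw [hFdef, Polynomial.degree_map_eq_of_injective hinj]
        exact hr
      exact Polynomial.eq_zero_of_dvd_of_degree_lt hFr
        (lt_of_le_of_lt Polynomial.degree_map_le hdF)
    have hr0 : r = 0 := (Polynomial.map_eq_zero_iff hinj).mp hrK
    rw [hr0, add_zero] at heq
    have hmemQ : Polynomial.C f.leadingCoeff ^ t * h ∈ Q := by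
      rw [heq]
      exact Ideal.mul_mem_right _ _ hfQ
    rcases hQp.mem_or_mem hmemQ with hc | hh
    · exact hclaim1 (Ideal.mem_comap.mpr (hQp.mem_of_pow_mem t hc))
    · exact hhP (hQP hh)
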